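/- For all real numbers $\lambda, \mu, a \geq 0$, all $\varepsilon > 0$, and all $p \geq 2$ with $p' = p/(p-1)$, the inequality $\lambda\mu \leq \max\{\varepsilon^{-1}, \varepsilon^{1/(1-p)}\}(a^{p-1} + \lambda)^{p'-2}\lambda^2 + \varepsilon(a + \mu)^{p-2}\mu^2$ holds. -/

import Mathlib

/-!
For `φ(t) = t^p / p`, `shiftedPowDeriv p a t = (a + t)^(p-2) t` is the derivative of the shifted
N-function `φ_a`, and `shiftedPowDeriv p' (a^(p-1))` that of `(φ*)_{φ'(a)}`, which is equivalent to
the conjugate of `φ_a`. If `λ ≤ ε φ_a'(μ)`, the second term alone bounds `λμ`. Otherwise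
`μ ≤ (φ*)_{φ'(a)}'(λ/ε)`, because `(φ*)_{φ'(a)}' ∘ φ_a'` dominates the identity, and rescaling
`λ/ε` back to `λ` costs at most the factor `max(ε⁻¹, ε^(1/(1-p)))`.
-/

open Real

noncomputable def shiftedPowDeriv (p a t : ℝ) : ℝ := (a + t) ^ (p - 2) * t

lemma shiftedPowDeriv_nonneg {p a t : ℝ} (ha : 0 ≤ a) (ht : 0 ≤ t) : 0 ≤ shiftedPowDeriv p a t := by
  unfold shiftedPowDeriv; positivity

lemma le_shiftedPowDeriv_conj_of_shiftedPowDeriv_le {p a x y : ℝ} (hp : 2 ≤ p) (ha : 0 ≤ a)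
    (hy : 0 ≤ y) (h : shiftedPowDeriv p a y ≤ x) :
    y ≤ shiftedPowDeriv (p / (p - 1)) (a ^ (p - 1)) x := by
  rcases hy.eq_or_lt with rfl | hy
  · exact shiftedPowDeriv_nonneg (by positivity) (by simpa [shiftedPowDeriv] using h)
  unfold shiftedPowDeriv at h ⊢
  have hay : 0 < a + y := by linarith
  have hx : 0 < x := (by positivity : 0 < (a + y) ^ (p - 2) * y).trans_le h
  have hp1 : p - 1 ≠ 0 := by linarith
  set A := a ^ (p - 1) with hA
  have hkey : y * (A + x) ≤ x * (a + y) := by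
    have : y * A ≤ x * a :=
      calc y * A = y * a ^ (p - 2) * a := by
            rw [hA, show p - 1 = p - 2 + 1 by ring, rpow_add_one' ha (by linarith)]; ring
        _ ≤ (a + y) ^ (p - 2) * y * a := by
          rw [mul_comm y]; gcongr; linarith
        _ ≤ x * a := by gcongr
    linarith
  rw [show p / (p - 1) - 2 = -((p - 2) / (p - 1)) by field_simp; ring,
    rpow_neg (by positivity), ← div_eq_inv_mul, le_div_iff₀ (by positivity)]
  refine (rpow_le_rpow_iff (by positivity) hx.le (by linarith : 0 < p - 1)).1 ?_
  calc (y * (A + x) ^ ((p - 2) / (p - 1))) ^ (p - 1)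
        = y * (y * (A + x)) ^ (p - 2) := by
        rw [mul_rpow hy.le (by positivity), ← rpow_mul (by positivity),
          div_mul_cancel₀ _ hp1, mul_rpow hy.le (by positivity),
          show p - 1 = p - 2 + 1 by ring, rpow_add_one hy.ne']
        ring
    _ ≤ y * (x * (a + y)) ^ (p - 2) := by gcongr
    _ = x ^ (p - 2) * ((a + y) ^ (p - 2) * y) := by rw [mul_rpow hx.le hay.le]; ring
    _ ≤ x ^ (p - 2) * x := by gcongr
    _ = x ^ (p - 1) := by rw [← rpow_add_one hx.ne']; ring_nf

lemma shiftedPowDeriv_div_le {q b s ε : ℝ} (hq : q ≤ 2) (hb : 0 ≤ b) (hs : 0 ≤ s) (hε : 0 < ε) :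
    shiftedPowDeriv q b (s / ε) ≤ max ε⁻¹ (ε ^ (1 - q)) * shiftedPowDeriv q b s := by
  rcases hs.eq_or_lt with rfl | hs
  · simp [shiftedPowDeriv]
  have hbs : 0 < b + s := by linarith
  unfold shiftedPowDeriv
  rcases le_total ε 1 with hε1 | hε1
  · calc (b + s / ε) ^ (q - 2) * (s / ε) ≤ (b + s) ^ (q - 2) * (s / ε) := by
          refine mul_le_mul_of_nonneg_right (rpow_le_rpow_of_nonpos hbs ?_ (by linarith))
            (by positivity)
          gcongr
          exact le_div_self hs.le hε hε1
      _ = ε⁻¹ * ((b + s) ^ (q - 2) * s) := by ring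
      _ ≤ _ := by gcongr; exact le_max_left _ _
  · calc (b + s / ε) ^ (q - 2) * (s / ε) ≤ ((b + s) / ε) ^ (q - 2) * (s / ε) := by
          refine mul_le_mul_of_nonneg_right
            (rpow_le_rpow_of_nonpos (by positivity) ?_ (by linarith)) (by positivity)
          rw [add_div]
          gcongr
          exact div_le_self hb hε1
      _ = ε ^ (1 - q) * ((b + s) ^ (q - 2) * s) := by
          rw [div_rpow hbs.le hε.le, show 1 - q = -(q - 2) - 1 by ring,
            rpow_sub_one hε.ne', rpow_neg hε.le]
          field_simp
      _ ≤ _ := by gcongr; exact le_max_right _ _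

theorem young_type_quasinorm_inequality (p l m a ε : ℝ)
    (hp : 2 ≤ p) (hl : 0 ≤ l) (hm : 0 ≤ m) (ha : 0 ≤ a) (hε : 0 < ε) :
    l * m ≤ max ε⁻¹ (ε ^ (1 / (1 - p))) * ((a ^ (p - 1) + l) ^ (p / (p - 1) - 2) * l ^ 2)
      + ε * ((a + m) ^ (p - 2) * m ^ 2) := by
  have hA : 0 ≤ a ^ (p - 1) := by positivity
  have hT₁ : (a ^ (p - 1) + l) ^ (p / (p - 1) - 2) * l ^ 2
      = shiftedPowDeriv (p / (p - 1)) (a ^ (p - 1)) l * l := by unfold shiftedPowDeriv; ring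
  have hT₂ : (a + m) ^ (p - 2) * m ^ 2 = shiftedPowDeriv p a m * m := by
    unfold shiftedPowDeriv; ring
  have hexp : 1 / (1 - p) = 1 - p / (p - 1) := by
    field_simp [sub_ne_zero.2 (by linarith : (1 : ℝ) ≠ p), sub_ne_zero.2 (by linarith : p ≠ 1)]
    ring
  rw [hT₁, hT₂, hexp]
  set C := max ε⁻¹ (ε ^ (1 - p / (p - 1)))
  have hT₁_nonneg : 0 ≤ C * (shiftedPowDeriv (p / (p - 1)) (a ^ (p - 1)) l * l) :=
    mul_nonneg (le_max_of_le_left (by positivity)) (mul_nonneg (shiftedPowDeriv_nonneg hA hl) hl)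
  have hT₂_nonneg : 0 ≤ ε * (shiftedPowDeriv p a m * m) :=
    mul_nonneg hε.le (mul_nonneg (shiftedPowDeriv_nonneg ha hm) hm)
  rcases le_total l (ε * shiftedPowDeriv p a m) with hsmall | hlarge
  · calc l * m ≤ ε * shiftedPowDeriv p a m * m := by gcongr
      _ ≤ _ := by rw [mul_assoc]; exact le_add_of_nonneg_left hT₁_nonneg
  · have hm' : m ≤ shiftedPowDeriv (p / (p - 1)) (a ^ (p - 1)) (l / ε) :=
      le_shiftedPowDeriv_conj_of_shiftedPowDeriv_le hp ha hm (by rwa [le_div_iff₀ hε, mul_comm])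
    have hscale := shiftedPowDeriv_div_le (q := p / (p - 1))
      (by rw [div_le_iff₀ (by linarith)]; linarith) hA hl hε
    calc l * m ≤ l * (C * shiftedPowDeriv (p / (p - 1)) (a ^ (p - 1)) l) := by
          gcongr; exact hm'.trans hscale
      _ = C * (shiftedPowDeriv (p / (p - 1)) (a ^ (p - 1)) l * l) := by ring
      _ ≤ _ := le_add_of_nonneg_right hT₂_nonneg
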